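/- arXiv:1910.00759 — 2 statements merged into one kernel-verified Lean document; each statement's English description precedes it below -/
import Mathlib

section
/- Assume the Schur complement S_h is invertible with continuous linear inverse S_h⁻¹ : V → V. Let H₁₁ := S_h⁻¹, H₁₂ := -S_h⁻¹ ∘ Y ∘ G⁻¹, H₂₁ := -G⁻¹ ∘ Z ∘ S_h⁻¹, H₂₂ := G⁻¹ + G⁻¹ ∘ Z ∘ S_h⁻¹ ∘ Y ∘ G⁻¹, and let M : EuclideanSpace ℝ (Fin 2) → EuclideanSpace ℝ (Fin 2) be the linear map with matrix entries ‖H₁₁‖, ‖H₁₂‖, ‖H₂₁‖, ‖H₂₂‖. Then for every (g₁, g₂) ∈ V × W, the unique solution (φ₁, φ₂) of T φ₁ + Y φ₂ = g₁, Z φ₁ + G φ₂ = g₂ satisfies √(‖φ₁‖² + ‖φ₂‖²) ≤ ‖M‖ · √(‖g₁‖² + ‖g₂‖²), where ‖M‖ is the operator norm of M with respect to the Euclidean norm on ℝ². -/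
/-!
Eliminating `φ₂ = G⁻¹ (g₂ - Z φ₁)` from the first equation leaves `S_h φ₁ = g₁ - Y G⁻¹ g₂`, so the
system has exactly one solution, and expanding it gives `φ₁ = H₁₁ g₁ + H₁₂ g₂`,
`φ₂ = H₂₁ g₁ + H₂₂ g₂`. The triangle inequality bounds the vector `(‖φ₁‖, ‖φ₂‖)` entrywise by
`M (‖g₁‖, ‖g₂‖)`, and since both vectors are entrywise nonnegative, the Euclidean norm of the
former is at most `‖M‖ · ‖(‖g₁‖, ‖g₂‖)‖`.
-/

section EuclideanPlane

open Matrix WithLp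

theorem EuclideanSpace.norm_toLp_vec2 (x y : ℝ) :
    ‖toLp 2 ![x, y]‖ = √(x ^ 2 + y ^ 2) := by
  simp [EuclideanSpace.norm_eq, Fin.sum_univ_two]

theorem Matrix.toEuclideanCLM_fin_two_toLp_vec2 (a b c d x y : ℝ) :
    toEuclideanCLM (𝕜 := ℝ) (n := Fin 2) !![a, b; c, d] (toLp 2 ![x, y]) =
      toLp 2 ![a * x + b * y, c * x + d * y] := by
  rw [toEuclideanCLM_toLp]
  congr 1
  ext i
  fin_cases i <;> simp [mulVec]

theorem Matrix.sqrt_sq_add_sq_le_norm_toEuclideanCLM_fin_two_mul {a b c d x y p q : ℝ}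
    (hp : 0 ≤ p) (hq : 0 ≤ q) (h₁ : p ≤ a * x + b * y) (h₂ : q ≤ c * x + d * y) :
    √(p ^ 2 + q ^ 2) ≤
      ‖(toEuclideanCLM (𝕜 := ℝ) (n := Fin 2) !![a, b; c, d] :
        EuclideanSpace ℝ (Fin 2) →L[ℝ] EuclideanSpace ℝ (Fin 2))‖ * √(x ^ 2 + y ^ 2) := by
  calc √(p ^ 2 + q ^ 2) ≤ √((a * x + b * y) ^ 2 + (c * x + d * y) ^ 2) := by gcongr
    _ = ‖toEuclideanCLM (𝕜 := ℝ) (n := Fin 2) !![a, b; c, d] (toLp 2 ![x, y])‖ := by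
      rw [toEuclideanCLM_fin_two_toLp_vec2, EuclideanSpace.norm_toLp_vec2]
    _ ≤ _ := by
      rw [← EuclideanSpace.norm_toLp_vec2]
      exact ContinuousLinearMap.le_opNorm _ _

end EuclideanPlane

theorem ContinuousLinearMap.norm_apply_add_apply_le {𝕜 E E' F : Type*}
    [NontriviallyNormedField 𝕜] [SeminormedAddCommGroup E] [NormedSpace 𝕜 E]
    [SeminormedAddCommGroup E'] [NormedSpace 𝕜 E'] [SeminormedAddCommGroup F] [NormedSpace 𝕜 F]
    (A : E →L[𝕜] F) (B : E' →L[𝕜] F) (x : E) (y : E') :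
    ‖A x + B y‖ ≤ ‖A‖ * ‖x‖ + ‖B‖ * ‖y‖ :=
  norm_add_le_of_le (A.le_opNorm x) (B.le_opNorm y)

section SchurComplement

variable {𝕜 V W : Type*} [NontriviallyNormedField 𝕜]
  [NormedAddCommGroup V] [NormedSpace 𝕜 V] [NormedAddCommGroup W] [NormedSpace 𝕜 W]
  {T : V →L[𝕜] V} {Y : W →L[𝕜] V} {Z : V →L[𝕜] W} {G Ginv : W →L[𝕜] W} {Shinv : V →L[𝕜] V}

theorem solves_block_system_schur
    (hG1 : G.comp Ginv = ContinuousLinearMap.id 𝕜 W)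
    (hSh1 : (T - Y.comp (Ginv.comp Z)).comp Shinv = ContinuousLinearMap.id 𝕜 V) (g₁ : V) (g₂ : W) :
    let φ₁ := Shinv (g₁ - Y (Ginv g₂))
    T φ₁ + Y (Ginv (g₂ - Z φ₁)) = g₁ ∧ Z φ₁ + G (Ginv (g₂ - Z φ₁)) = g₂ := by
  intro φ₁
  have hG : ∀ w, G (Ginv w) = w := DFunLike.congr_fun hG1
  have hS : T φ₁ - Y (Ginv (Z φ₁)) = g₁ - Y (Ginv g₂) := DFunLike.congr_fun hSh1 _
  constructor
  · rw [map_sub, map_sub]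
    linear_combination (norm := module) hS
  · rw [hG]; abel

theorem eq_of_solves_block_system_schur
    (hG2 : Ginv.comp G = ContinuousLinearMap.id 𝕜 W)
    (hSh2 : Shinv.comp (T - Y.comp (Ginv.comp Z)) = ContinuousLinearMap.id 𝕜 V)
    {g₁ ψ₁ : V} {g₂ ψ₂ : W} (h₁ : T ψ₁ + Y ψ₂ = g₁) (h₂ : Z ψ₁ + G ψ₂ = g₂) :
    ψ₁ = Shinv (g₁ - Y (Ginv g₂)) ∧ ψ₂ = Ginv (g₂ - Z ψ₁) := by
  subst h₁ h₂
  have hG : Ginv (G ψ₂) = ψ₂ := DFunLike.congr_fun hG2 ψ₂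
  have hS : Shinv (T ψ₁ - Y (Ginv (Z ψ₁))) = ψ₁ := DFunLike.congr_fun hSh2 ψ₁
  refine ⟨?_, by rw [add_sub_cancel_left, hG]⟩
  conv_lhs => rw [← hS]
  rw [map_add, map_add, hG]
  congr 1
  abel

theorem schur_solution_fst_eq (g₁ : V) (g₂ : W) :
    Shinv (g₁ - Y (Ginv g₂)) = Shinv g₁ + (-(Shinv.comp (Y.comp Ginv))) g₂ := by
  simp [sub_eq_add_neg]

theorem schur_solution_snd_eq (g₁ : V) (g₂ : W) :
    Ginv (g₂ - Z (Shinv (g₁ - Y (Ginv g₂)))) =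
      (-(Ginv.comp (Z.comp Shinv))) g₁ +
        (Ginv + Ginv.comp (Z.comp (Shinv.comp (Y.comp Ginv)))) g₂ := by
  simp only [map_sub, neg_apply, add_apply, ContinuousLinearMap.comp_apply]
  abel

end SchurComplement

theorem stmt_12_general
    {V W : Type*} [NormedAddCommGroup V] [InnerProductSpace ℝ V]
    [NormedAddCommGroup W] [InnerProductSpace ℝ W]
    (T : V →L[ℝ] V) (Y : W →L[ℝ] V) (Z : V →L[ℝ] W) (G : W →L[ℝ] W)
    (Ginv : W →L[ℝ] W)
    (hG1 : G.comp Ginv = ContinuousLinearMap.id ℝ W)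
    (hG2 : Ginv.comp G = ContinuousLinearMap.id ℝ W)
    (Shinv : V →L[ℝ] V)
    (hSh1 : (T - Y.comp (Ginv.comp Z)).comp Shinv = ContinuousLinearMap.id ℝ V)
    (hSh2 : Shinv.comp (T - Y.comp (Ginv.comp Z)) = ContinuousLinearMap.id ℝ V) :
    ∀ g₁ : V, ∀ g₂ : W,
      ∃ φ₁ : V, ∃ φ₂ : W,
        (T φ₁ + Y φ₂ = g₁ ∧ Z φ₁ + G φ₂ = g₂) ∧
        (∀ ψ₁ : V, ∀ ψ₂ : W, T ψ₁ + Y ψ₂ = g₁ → Z ψ₁ + G ψ₂ = g₂ →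
          ψ₁ = φ₁ ∧ ψ₂ = φ₂) ∧
        Real.sqrt (‖φ₁‖ ^ 2 + ‖φ₂‖ ^ 2) ≤
          ‖(Matrix.toEuclideanCLM (𝕜 := ℝ) (n := Fin 2)
              !![‖Shinv‖, ‖-(Shinv.comp (Y.comp Ginv))‖;
                 ‖-(Ginv.comp (Z.comp Shinv))‖,
                 ‖Ginv + Ginv.comp (Z.comp (Shinv.comp (Y.comp Ginv)))‖] :
            EuclideanSpace ℝ (Fin 2) →L[ℝ] EuclideanSpace ℝ (Fin 2))‖ *
            Real.sqrt (‖g₁‖ ^ 2 + ‖g₂‖ ^ 2) := by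
  intro g₁ g₂
  refine ⟨_, _, solves_block_system_schur hG1 hSh1 g₁ g₂, fun ψ₁ ψ₂ h₁ h₂ => ?_, ?_⟩
  · obtain ⟨rfl, rfl⟩ := eq_of_solves_block_system_schur hG2 hSh2 h₁ h₂
    exact ⟨rfl, rfl⟩
  · rw [schur_solution_snd_eq, schur_solution_fst_eq]
    exact Matrix.sqrt_sq_add_sq_le_norm_toEuclideanCLM_fin_two_mul (norm_nonneg _) (norm_nonneg _)
      (ContinuousLinearMap.norm_apply_add_apply_le _ _ _ _)
      (ContinuousLinearMap.norm_apply_add_apply_le _ _ _ _)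

/-- Context: `V`, `W` real Hilbert spaces with the ℓ² product norm on `V × W`;
`G` invertible with continuous linear inverse `Ginv`; `S_h := T - Y ∘ Ginv ∘ Z`
invertible with continuous linear inverse `Shinv`. With `H₁₁ := Shinv`,
`H₁₂ := -(Shinv∘Y∘Ginv)`, `H₂₁ := -(Ginv∘Z∘Shinv)`, `H₂₂ := Ginv + Ginv∘Z∘Shinv∘Y∘Ginv`,
and `M` the operator on `EuclideanSpace ℝ (Fin 2)` with matrix entries the norms of the
blocks, for every `(g₁, g₂)` the unique solution `(φ₁, φ₂)` of `T φ₁ + Y φ₂ = g₁`,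
`Z φ₁ + G φ₂ = g₂` satisfies `√(‖φ₁‖² + ‖φ₂‖²) ≤ ‖M‖ · √(‖g₁‖² + ‖g₂‖²)`. -/
theorem stmt_12
    {V W : Type*} [NormedAddCommGroup V] [InnerProductSpace ℝ V] [CompleteSpace V]
    [NormedAddCommGroup W] [InnerProductSpace ℝ W] [CompleteSpace W]
    (T : V →L[ℝ] V) (Y : W →L[ℝ] V) (Z : V →L[ℝ] W) (G : W →L[ℝ] W)
    (Ginv : W →L[ℝ] W)
    (hG1 : G.comp Ginv = ContinuousLinearMap.id ℝ W)
    (hG2 : Ginv.comp G = ContinuousLinearMap.id ℝ W)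
    (Shinv : V →L[ℝ] V)
    (hSh1 : (T - Y.comp (Ginv.comp Z)).comp Shinv = ContinuousLinearMap.id ℝ V)
    (hSh2 : Shinv.comp (T - Y.comp (Ginv.comp Z)) = ContinuousLinearMap.id ℝ V) :
    ∀ g₁ : V, ∀ g₂ : W,
      ∃ φ₁ : V, ∃ φ₂ : W,
        (T φ₁ + Y φ₂ = g₁ ∧ Z φ₁ + G φ₂ = g₂) ∧
        (∀ ψ₁ : V, ∀ ψ₂ : W, T ψ₁ + Y ψ₂ = g₁ → Z ψ₁ + G ψ₂ = g₂ →
          ψ₁ = φ₁ ∧ ψ₂ = φ₂) ∧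
        Real.sqrt (‖φ₁‖ ^ 2 + ‖φ₂‖ ^ 2) ≤
          ‖(Matrix.toEuclideanCLM (𝕜 := ℝ) (n := Fin 2)
              !![‖Shinv‖, ‖-(Shinv.comp (Y.comp Ginv))‖;
                 ‖-(Ginv.comp (Z.comp Shinv))‖,
                 ‖Ginv + Ginv.comp (Z.comp (Shinv.comp (Y.comp Ginv)))‖] :
            EuclideanSpace ℝ (Fin 2) →L[ℝ] EuclideanSpace ℝ (Fin 2))‖ *
            Real.sqrt (‖g₁‖ ^ 2 + ‖g₂‖ ^ 2) :=
  stmt_12_general T Y Z G Ginv hG1 hG2 Shinv hSh1 hSh2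
end

section
/- Assume ‖L⁻¹(F(û))‖ ≤ β; assume that for every v ∈ X with ‖v‖ ≤ 2β the operator norm of L⁻¹ ∘ (F'(û) - F'(û + v)) : X → X is at most ω‖v‖; and assume βω < 1/2. Then, setting ρ := (1 - √(1 - 2βω))/ω, there exists u ∈ X with ‖u - û‖ ≤ ρ and F(u) = 0; moreover, u is the unique zero of F in the closed ball {x ∈ X : ‖x - û‖ ≤ 2β}. -/
/-!
The zeros of `F` are the fixed points of the simplified Newton map `T x = x - L⁻¹ F x`, whose
derivative `L⁻¹ (F' û - F' x)` has norm at most `ω ‖x - û‖`. Integrating this along segments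
from `û` gives `‖T x - T û‖ ≤ ω/2 ‖x - û‖²`, so `T` maps the ball of radius `ρ` into itself
because `ρ` is the smaller root of `ω/2 ρ² - ρ + β`, and there it is a contraction with constant
`ω ρ = 1 - √(1 - 2βω) < 1`; on the ball of radius `2β` it is still a contraction with constant
`2βω < 1`, which gives uniqueness.
-/

open Function Metric Set

section DerivativeVanishingLinearly

variable {E G : Type*} [NormedAddCommGroup E] [NormedSpace ℝ E]
  [NormedAddCommGroup G] [NormedSpace ℝ G]
  {f : E → G} {f' : E → E →L[ℝ] G} {a : E} {r ω : ℝ}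

theorem norm_sub_le_half_mul_sq_of_norm_fderiv_le
    (hf : ∀ x ∈ closedBall a r, HasFDerivAt f (f' x) x)
    (hf' : ∀ x ∈ closedBall a r, ‖f' x‖ ≤ ω * ‖x - a‖) {x : E} (hx : x ∈ closedBall a r) :
    ‖f x - f a‖ ≤ ω / 2 * ‖x - a‖ ^ 2 := by
  set v := x - a
  have hseg : ∀ t ∈ Icc (0 : ℝ) 1, a + t • v ∈ closedBall a r := fun t ht =>
    (convex_closedBall a r).add_smul_sub_mem (mem_closedBall_self (dist_nonneg.trans hx)) hx ht
  have hg : ∀ t ∈ Icc (0 : ℝ) 1,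
      HasDerivAt (fun t : ℝ => f (a + t • v) - f a) (f' (a + t • v) v) t := fun t ht =>
    ((hf _ (hseg t ht)).comp_hasDerivAt t
      (((hasDerivAt_id t).smul_const v).const_add a |>.congr_deriv (one_smul ℝ v))).sub_const _
  have hB : ∀ t : ℝ, HasDerivAt (fun t : ℝ => ω / 2 * t ^ 2 * ‖v‖ ^ 2) (ω * t * ‖v‖ ^ 2) t :=
    fun t => (((hasDerivAt_pow 2 t).const_mul (ω / 2)).mul_const _).congr_deriv (by ring)
  have hbound : ∀ t ∈ Ico (0 : ℝ) 1, ‖f' (a + t • v) v‖ ≤ ω * t * ‖v‖ ^ 2 := fun t ht =>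
    calc ‖f' (a + t • v) v‖ ≤ ‖f' (a + t • v)‖ * ‖v‖ := (f' _).le_opNorm v
      _ ≤ ω * ‖a + t • v - a‖ * ‖v‖ :=
        mul_le_mul_of_nonneg_right (hf' _ (hseg t (Ico_subset_Icc_self ht))) (norm_nonneg v)
      _ = ω * t * ‖v‖ ^ 2 := by
        rw [add_sub_cancel_left, norm_smul, Real.norm_of_nonneg ht.1]; ring
  have := image_norm_le_of_norm_deriv_right_le_deriv_boundary
    (fun t ht => (hg t ht).continuousAt.continuousWithinAt)
    (fun t ht => (hg t (Ico_subset_Icc_self ht)).hasDerivWithinAt) (by simp) hB hbound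
    (right_mem_Icc.2 zero_le_one)
  simpa [v] using this

theorem norm_sub_le_of_norm_fderiv_le (hω : 0 ≤ ω)
    (hf : ∀ x ∈ closedBall a r, HasFDerivAt f (f' x) x)
    (hf' : ∀ x ∈ closedBall a r, ‖f' x‖ ≤ ω * ‖x - a‖) {x y : E}
    (hx : x ∈ closedBall a r) (hy : y ∈ closedBall a r) :
    ‖f x - f y‖ ≤ ω * r * ‖x - y‖ :=
  (convex_closedBall a r).norm_image_sub_le_of_norm_hasFDerivWithin_le
    (fun z hz => (hf z hz).hasFDerivWithinAt)
    (fun z hz => (hf' z hz).trans (mul_le_mul_of_nonneg_left (mem_closedBall_iff_norm.1 hz) hω))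
    hy hx

end DerivativeVanishingLinearly

section FixedPoint

variable {E : Type*} [NormedAddCommGroup E] [NormedSpace ℝ E]
  {T : E → E} {T' : E → E →L[ℝ] E} {a : E} {r β ω : ℝ}

theorem exists_isFixedPt_closedBall_of_norm_fderiv_le [CompleteSpace E] (hω : 0 ≤ ω)
    (hT : ∀ x ∈ closedBall a r, HasFDerivAt T (T' x) x)
    (hT' : ∀ x ∈ closedBall a r, ‖T' x‖ ≤ ω * ‖x - a‖)
    (hβ : ‖T a - a‖ ≤ β) (hr : ω / 2 * r ^ 2 + β ≤ r) (hωr : ω * r < 1) :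
    ∃ u ∈ closedBall a r, IsFixedPt T u := by
  have hr₀ : 0 ≤ r := by nlinarith [norm_nonneg (T a - a)]
  have hmaps : MapsTo T (closedBall a r) (closedBall a r) := fun x hx => by
    have hx' := mem_closedBall_iff_norm.1 hx
    rw [mem_closedBall_iff_norm]
    calc ‖T x - a‖ ≤ ‖T x - T a‖ + ‖T a - a‖ := norm_sub_le_norm_sub_add_norm_sub _ _ _
      _ ≤ ω / 2 * ‖x - a‖ ^ 2 + β :=
        add_le_add (norm_sub_le_half_mul_sq_of_norm_fderiv_le hT hT' hx) hβ
      _ ≤ ω / 2 * r ^ 2 + β := by gcongr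
      _ ≤ r := hr
  have hlip : LipschitzOnWith (Real.toNNReal (ω * r)) T (closedBall a r) :=
    LipschitzOnWith.of_dist_le_mul fun x hx y hy => by
      rw [dist_eq_norm, dist_eq_norm, Real.coe_toNNReal _ (by positivity)]
      exact norm_sub_le_of_norm_fderiv_le hω hT hT' hx hy
  obtain ⟨u, hu, hfix, -⟩ := ContractingWith.exists_fixedPoint'
    isClosed_closedBall.isComplete hmaps
    ⟨by simpa using hωr, hlip.mapsToRestrict hmaps⟩ (mem_closedBall_self hr₀) (edist_ne_top _ _)
  exact ⟨u, hu, hfix⟩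

theorem eq_of_isFixedPt_closedBall_of_norm_fderiv_le (hω : 0 ≤ ω)
    (hT : ∀ x ∈ closedBall a r, HasFDerivAt T (T' x) x)
    (hT' : ∀ x ∈ closedBall a r, ‖T' x‖ ≤ ω * ‖x - a‖) (hωr : ω * r < 1) {x y : E}
    (hx : x ∈ closedBall a r) (hy : y ∈ closedBall a r) (hTx : IsFixedPt T x)
    (hTy : IsFixedPt T y) : x = y := by
  have := norm_sub_le_of_norm_fderiv_le hω hT hT' hx hy
  rw [hTx, hTy] at this
  exact sub_eq_zero.1 (norm_eq_zero.1 (by nlinarith [norm_nonneg (x - y)]))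

end FixedPoint

theorem kantorovich_radius_spec {β ω : ℝ} (hβ : 0 ≤ β) (hω : 0 < ω) (hβω : β * ω < 1 / 2) :
    let ρ := (1 - Real.sqrt (1 - 2 * β * ω)) / ω
    ω / 2 * ρ ^ 2 + β = ρ ∧ ω * ρ < 1 ∧ ρ ≤ 2 * β := by
  intro ρ
  set s := Real.sqrt (1 - 2 * β * ω)
  have hs_pos : 0 < s := Real.sqrt_pos.2 (by linarith)
  have hs_sq : s ^ 2 = 1 - 2 * β * ω := Real.sq_sqrt (by linarith)
  have hs_le : s ≤ 1 := by nlinarith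
  have hωρ : ω * ρ = 1 - s := mul_div_cancel₀ _ hω.ne'
  refine ⟨?_, by linarith, ?_⟩
  · field_simp [ρ]; nlinarith
  · rw [div_le_iff₀ hω]; nlinarith

theorem stmt_13_general
    {X Y : Type*} [NormedAddCommGroup X] [NormedSpace ℝ X] [CompleteSpace X]
    [NormedAddCommGroup Y] [NormedSpace ℝ Y]
    (β ω : ℝ) (hω : 0 < ω)
    (uh : X) (F : X → Y) (F' : X → X →L[ℝ] Y)
    (hdiff : ∀ x : X, ‖x - uh‖ ≤ 2 * β → HasFDerivAt F (F' x) x)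
    (Linv : Y →L[ℝ] X)
    (hL1 : (F' uh).comp Linv = ContinuousLinearMap.id ℝ Y)
    (hL2 : Linv.comp (F' uh) = ContinuousLinearMap.id ℝ X)
    (hβbound : ‖Linv (F uh)‖ ≤ β)
    (hωbound : ∀ v : X, ‖v‖ ≤ 2 * β →
      ‖Linv.comp (F' uh - F' (uh + v))‖ ≤ ω * ‖v‖)
    (hβω : β * ω < 1 / 2) :
    ∃ u : X, ‖u - uh‖ ≤ (1 - Real.sqrt (1 - 2 * β * ω)) / ω ∧ F u = 0 ∧
      ∀ x : X, ‖x - uh‖ ≤ 2 * β → F x = 0 → x = u := by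
  obtain ⟨hρ, hωρ, hρβ⟩ :=
    kantorovich_radius_spec ((norm_nonneg _).trans hβbound) hω hβω
  set T : X → X := fun x => x - Linv (F x)
  have hT : ∀ x ∈ closedBall uh (2 * β), HasFDerivAt T (Linv.comp (F' uh - F' x)) x :=
    fun x hx => by
      refine ((hasFDerivAt_id x).sub
        (Linv.hasFDerivAt.comp x (hdiff x (mem_closedBall_iff_norm.1 hx)))).congr_fderiv ?_
      rw [ContinuousLinearMap.comp_sub, hL2]
  have hT' : ∀ x ∈ closedBall uh (2 * β), ‖Linv.comp (F' uh - F' x)‖ ≤ ω * ‖x - uh‖ :=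
    fun x hx => by simpa using hωbound (x - uh) (mem_closedBall_iff_norm.1 hx)
  have hfix : ∀ x, IsFixedPt T x ↔ F x = 0 := fun x => by
    have hinj : Injective Linv := LeftInverse.injective (g := F' uh) fun y => congrArg (· y) hL1
    simp [IsFixedPt, T, sub_eq_self, hinj.eq_iff' (map_zero Linv)]
  have hsub : closedBall uh ((1 - Real.sqrt (1 - 2 * β * ω)) / ω) ⊆ closedBall uh (2 * β) :=
    closedBall_subset_closedBall hρβ
  obtain ⟨u, hu, hTu⟩ := exists_isFixedPt_closedBall_of_norm_fderiv_le hω.le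
    (fun x hx => hT x (hsub hx)) (fun x hx => hT' x (hsub hx))
    (by simpa [T] using hβbound) hρ.le hωρ
  refine ⟨u, mem_closedBall_iff_norm.1 hu, (hfix u).1 hTu, fun x hx hFx => ?_⟩
  exact eq_of_isFixedPt_closedBall_of_norm_fderiv_le hω.le hT hT' (by linarith)
    (mem_closedBall_iff_norm.2 hx) (hsub hu) ((hfix x).2 hFx) hTu

/-- Context: `X`, `Y` real Banach spaces; `β ≥ 0`, `ω > 0`; `F : X → Y` Fréchet
differentiable at every point of the closed ball of radius `2β` around `uh`, with
derivative `F' x`; `L := F' uh` invertible with continuous linear inverse `Linv`.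
Statement: if `‖Linv (F uh)‖ ≤ β`, if `‖Linv ∘ (F' uh - F' (uh + v))‖ ≤ ω ‖v‖` for all
`‖v‖ ≤ 2β`, and if `β ω < 1/2`, then with `ρ := (1 - √(1 - 2βω))/ω` there exists
`u` with `‖u - uh‖ ≤ ρ` and `F u = 0`, which is the unique zero of `F` in the closed
ball `{x : ‖x - uh‖ ≤ 2β}`. -/
theorem stmt_13
    {X Y : Type*} [NormedAddCommGroup X] [NormedSpace ℝ X] [CompleteSpace X]
    [NormedAddCommGroup Y] [NormedSpace ℝ Y] [CompleteSpace Y]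
    (β ω : ℝ) (hβ : 0 ≤ β) (hω : 0 < ω)
    (uh : X) (F : X → Y) (F' : X → X →L[ℝ] Y)
    (hdiff : ∀ x : X, ‖x - uh‖ ≤ 2 * β → HasFDerivAt F (F' x) x)
    (Linv : Y →L[ℝ] X)
    (hL1 : (F' uh).comp Linv = ContinuousLinearMap.id ℝ Y)
    (hL2 : Linv.comp (F' uh) = ContinuousLinearMap.id ℝ X)
    (hβbound : ‖Linv (F uh)‖ ≤ β)
    (hωbound : ∀ v : X, ‖v‖ ≤ 2 * β →
      ‖Linv.comp (F' uh - F' (uh + v))‖ ≤ ω * ‖v‖)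
    (hβω : β * ω < 1 / 2) :
    ∃ u : X, ‖u - uh‖ ≤ (1 - Real.sqrt (1 - 2 * β * ω)) / ω ∧ F u = 0 ∧
      ∀ x : X, ‖x - uh‖ ≤ 2 * β → F x = 0 → x = u :=
  stmt_13_general β ω hω uh F F' hdiff Linv hL1 hL2 hβbound hωbound hβω
end
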